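/- Let Λ be the Lobachevsky function. Then (16/9)·Λ(π/4) > Λ(3π/8) + Λ(π/8). -/

import Mathlib

open Real

/-- The Lobachevsky function `Λ(θ) = −∫₀^θ log|2 sin t| dt`. -/
noncomputable def lobachevsky (θ : ℝ) : ℝ :=
  -∫ t in (0:ℝ)..θ, Real.log |2 * Real.sin t|

/-!
Two elementary comparisons of the integrand suffice. Since `sin t ≤ t`, the function
`Λ(θ) - θ (1 - log 2θ)` is nondecreasing on `[0, π)`; this bounds `Λ(π/8)` and
`Λ(π/4) - Λ(π/8)` from below. Since `|2 sin t| ≤ 2` and `Λ(π/2) = 0` (Euler's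
`∫₀^{π/2} log sin t dt = -(π/2) log 2`), `Λ(3π/8) ≤ (π/8) log 2`. Writing
`(16/9) Λ(π/4) - Λ(π/8) = (16/9) (Λ(π/4) - Λ(π/8)) + (7/9) Λ(π/8)` and combining the three
bounds, the claim reduces to `23 log π < 23 + 5 log 2`, which holds with a margin of about `0.14`.
-/

open MeasureTheory

theorem intervalIntegrable_log_abs_two_mul_sin (a b : ℝ) :
    IntervalIntegrable (fun t => log |2 * sin t|) volume a b := by
  simpa only [Function.comp_def, log_abs] using
    (analyticOnNhd_const.mul analyticOnNhd_sin).meromorphicOn.intervalIntegrable_log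
      (a := a) (b := b) (f := fun t => 2 * sin t)

theorem lobachevsky_sub_lobachevsky (a b : ℝ) :
    lobachevsky a - lobachevsky b = ∫ t in a..b, log |2 * sin t| := by
  rw [lobachevsky, lobachevsky, neg_sub_neg, intervalIntegral.integral_interval_sub_left
    (intervalIntegrable_log_abs_two_mul_sin 0 b) (intervalIntegrable_log_abs_two_mul_sin 0 a)]

@[simp]
theorem lobachevsky_zero : lobachevsky 0 = 0 := by
  simp [lobachevsky]

theorem lobachevsky_pi_div_two : lobachevsky (π / 2) = 0 := by
  have hsplit : ∫ t in (0:ℝ)..π / 2, log |2 * sin t|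
      = ∫ t in (0:ℝ)..π / 2, (log 2 + log (sin t)) := by
    refine intervalIntegral.integral_congr_ae (Filter.Eventually.of_forall fun t ht => ?_)
    rw [Set.uIoc_of_le (by positivity)] at ht
    have hsin : 0 < sin t := sin_pos_of_pos_of_lt_pi ht.1 (by linarith [ht.2, pi_pos])
    rw [abs_of_pos (by positivity), log_mul two_ne_zero hsin.ne']
  rw [lobachevsky, hsplit, intervalIntegral.integral_add intervalIntegrable_const
    (by simpa [Function.comp_def] using intervalIntegrable_log_sin),
    integral_log_sin_zero_pi_div_two]
  simp only [intervalIntegral.integral_const, sub_zero, smul_eq_mul]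
  ring

theorem log_abs_two_mul_sin_le_log_two (t : ℝ) : log |2 * sin t| ≤ log 2 := by
  rcases eq_or_ne (sin t) 0 with hsin | hsin
  · simp [hsin, (log_pos one_lt_two).le]
  · refine log_le_log (by positivity) ?_
    rw [abs_mul, abs_two]
    linarith [abs_sin_le_one t]

theorem lobachevsky_sub_lobachevsky_le {a b : ℝ} (hab : a ≤ b) :
    lobachevsky a - lobachevsky b ≤ (b - a) * log 2 := by
  rw [lobachevsky_sub_lobachevsky]
  calc ∫ t in a..b, log |2 * sin t|
      ≤ ∫ _ in a..b, log 2 :=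
        intervalIntegral.integral_mono_on hab (intervalIntegrable_log_abs_two_mul_sin a b)
          intervalIntegrable_const fun t _ => log_abs_two_mul_sin_le_log_two t
    _ = (b - a) * log 2 := by simp

theorem log_abs_two_mul_sin_le_log_two_mul {t : ℝ} (h0 : 0 ≤ t) (hπ : t < π) :
    log |2 * sin t| ≤ log (2 * t) := by
  rcases h0.eq_or_lt with rfl | ht
  · simp
  · have hsin : 0 < sin t := sin_pos_of_pos_of_lt_pi ht hπ
    rw [abs_of_pos (by positivity)]
    exact log_le_log (by positivity) (by linarith [sin_le h0])

theorem integral_log_two_mul (a b : ℝ) :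
    ∫ t in a..b, log (2 * t) = b * (log (2 * b) - 1) - a * (log (2 * a) - 1) := by
  rw [intervalIntegral.integral_comp_mul_left (fun t => log t) two_ne_zero, integral_log,
    smul_eq_mul]
  ring

theorem intervalIntegrable_log_two_mul (a b : ℝ) :
    IntervalIntegrable (fun t => log (2 * t)) volume a b := by
  simpa using
    (intervalIntegral.intervalIntegrable_log' (a := 2 * a) (b := 2 * b)).comp_mul_left (c := 2)

/-- `θ (1 - log 2θ)` is the small-angle approximation of `Λ θ`. -/
theorem sub_le_lobachevsky_sub_lobachevsky {a b : ℝ} (h0 : 0 ≤ a) (hab : a ≤ b)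
    (hπ : b < π) :
    b * (1 - log (2 * b)) - a * (1 - log (2 * a)) ≤ lobachevsky b - lobachevsky a := by
  have hint : ∫ t in a..b, log |2 * sin t| ≤ ∫ t in a..b, log (2 * t) :=
    intervalIntegral.integral_mono_on hab (intervalIntegrable_log_abs_two_mul_sin a b)
      (intervalIntegrable_log_two_mul a b) fun t ht =>
        log_abs_two_mul_sin_le_log_two_mul (h0.trans ht.1) (ht.2.trans_lt hπ)
  linarith [lobachevsky_sub_lobachevsky a b, integral_log_two_mul a b]

theorem log_pi_lt_d3 : log π < 1.146 := by
  have hsplit : log π = log 3 + log (π / 3) := by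
    rw [log_div pi_pos.ne' three_ne_zero]
    ring
  have hquot : log (π / 3) ≤ π / 3 - 1 := log_le_sub_one_of_pos (by positivity)
  linarith [log_three_lt_d9, pi_lt_d4]

/-- Remark 2.1: `ω(A(4)*) > ω(A(4))`, i.e.
`(16/9)Λ(π/4) > Λ(3π/8) + Λ(π/8)`. -/
theorem edge_twist_increases_normalized_volume :
    (16 / 9 : ℝ) * lobachevsky (π / 4)
      > lobachevsky (3 * π / 8) + lobachevsky (π / 8) := by
  have hπ := pi_pos
  have hlow8 :=
    sub_le_lobachevsky_sub_lobachevsky le_rfl (by positivity) (by linarith : π / 8 < π)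
  have hlow48 :=
    sub_le_lobachevsky_sub_lobachevsky (by positivity) (by linarith : π / 8 ≤ π / 4)
      (by linarith : π / 4 < π)
  have hup38 := lobachevsky_sub_lobachevsky_le (by linarith : 3 * π / 8 ≤ π / 2)
  rw [lobachevsky_pi_div_two] at hup38
  have hlog8 : log (2 * (π / 8)) = log π - 2 * log 2 := by
    rw [show 2 * (π / 8) = π / 2 ^ 2 by ring, log_div hπ.ne' (by norm_num), log_pow]
    push_cast
    ring
  have hlog4 : log (2 * (π / 4)) = log π - log 2 := by
    rw [show 2 * (π / 4) = π / 2 by ring, log_div hπ.ne' two_ne_zero]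
  simp only [mul_zero, zero_mul, sub_zero, lobachevsky_zero, hlog8, hlog4] at hlow8 hlow48
  have hmargin : 0 < π * (23 - 23 * log π + 5 * log 2) :=
    mul_pos hπ (by linarith [log_pi_lt_d3, log_two_gt_d9])
  linarith
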